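/- In U(𝔰𝔩₂(ℂ)) with generators X, Y, Z satisfying [X,Y]=Z, [Y,Z]=X, [Z,X]=Y, the set {Xᵐ Yⁿ Zᵛ (P−c)ᵏ : m,n,k ∈ ℕ, ν ∈ {0,1}} spans U(𝔰𝔩₂(ℂ)), where P = X²+Y²+Z² and c ∈ ℂ; equivalently, the images [Xᵐ Yⁿ Zᵛ] with m,n ∈ ℕ, ν ∈ {0,1} span the quotient U(𝔰𝔩₂(ℂ))/(P−c). -/

import Mathlib

/-!
Let `M` be the span of the monomials `xᵐ yⁿ zᵛ Pᵏ`, where `P = x² + y² + z² - c` is central.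
Since `1 ∈ M` and `x, y, z` generate the algebra, it suffices that `M` is closed under right
multiplication by `x`, `y` and `z`, and by centrality of `P` only `xᵐ yⁿ zᵛ g` with `ν ≤ 1` has to
be checked. Moving `x` leftwards past `yⁿ` produces, besides `xᵐ⁺¹ yⁿ`, only ordered monomials
with a smaller power of `y`; together with `z² = P + c - x² - y²` this lets a strong induction on
`n` treat `xᵐ yⁿ z x` and `xᵐ yⁿ z z` simultaneously.
-/

open UniversalEnvelopingAlgebra Submodule

theorem Submodule.eq_top_of_one_mem_of_mul_mem {R A : Type*} [CommSemiring R] [Semiring A]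
    [Algebra R A] {s : Set A} (hs : Algebra.adjoin R s = ⊤) {M : Submodule R A}
    (h1 : 1 ∈ M) (hmul : ∀ a ∈ M, ∀ g ∈ s, a * g ∈ M) : M = ⊤ := by
  rw [eq_top_iff]
  rintro b -
  have hb : b ∈ Algebra.adjoin R s := hs ▸ Algebra.mem_top
  suffices ∀ a ∈ M, a * b ∈ M by simpa using this 1 h1
  induction hb using Algebra.adjoin_induction with
  | mem g hg => exact fun a ha => hmul a ha g hg
  | algebraMap r =>
    intro a ha
    rw [← Algebra.commutes, ← Algebra.smul_def]
    exact M.smul_mem r ha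
  | add b b' _ _ hb hb' =>
    exact fun a ha => mul_add a b b' ▸ M.add_mem (hb a ha) (hb' a ha)
  | mul b b' _ _ hb hb' => exact fun a ha => mul_assoc a b b' ▸ hb' _ (hb a ha)

theorem Submodule.mul_right_mem_of_mem_span {R A : Type*} [CommSemiring R] [Semiring A]
    [Algebra R A] {s : Set A} {T : Submodule R A} {b g : A} (hb : b ∈ span R s)
    (h : ∀ u ∈ s, u * g ∈ T) : b * g ∈ T :=
  (span_le (p := T.comap (LinearMap.mulRight R g))).mpr h hb

theorem UniversalEnvelopingAlgebra.adjoin_range_ι (R L : Type*) [CommRing R] [LieRing L]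
    [LieAlgebra R L] :
    Algebra.adjoin R (Set.range (ι R : L → UniversalEnvelopingAlgebra R L)) = ⊤ := by
  have : Set.range (ι R : L → UniversalEnvelopingAlgebra R L) =
      mkAlgHom R L '' Set.range (TensorAlgebra.ι R) := by
    rw [← Set.range_comp]; rfl
  rw [this, ← AlgHom.map_adjoin, TensorAlgebra.adjoin_range_ι, Algebra.map_top,
    AlgHom.range_eq_top]
  exact RingCon.mkₐ_surjective _

theorem UniversalEnvelopingAlgebra.adjoin_image_ι_eq_top {R L : Type*} [CommRing R] [LieRing L]
    [LieAlgebra R L] {s : Set L} (hs : span R s = ⊤) :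
    Algebra.adjoin R (ι R '' s) = ⊤ := by
  have : ι R '' s = ((mkAlgHom R L).toLinearMap ∘ₗ TensorAlgebra.ι R) '' s := rfl
  rw [← Algebra.adjoin_span, this, Submodule.span_image, hs, Submodule.map_top,
    LinearMap.coe_range]
  exact adjoin_range_ι R L

-- `LieRing.ofAssociativeRing`, with respect to which `ι R` is a Lie hom, is not a global instance.
theorem UniversalEnvelopingAlgebra.ι_lie {R L : Type*} [CommRing R] [LieRing L]
    [LieAlgebra R L] (x y : L) : ι R ⁅x, y⁆ = ⁅ι R x, ι R y⁆ :=
  @LieHom.map_lie _ _ _ _ _ _ LieRing.ofAssociativeRing _ (ι R) x y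

section OrderedMonomials

variable {R A : Type*} [CommRing R] [Ring A] [Algebra R A]

theorem commute_sq_add_sq_add_sq {x y z : A} (hxy : ⁅x, y⁆ = z) (hzx : ⁅z, x⁆ = y) :
    Commute (x ^ 2 + y ^ 2 + z ^ 2) x := by
  rw [Ring.lie_def] at hxy hzx
  have hy : y ^ 2 * x = x * y ^ 2 - (y * z + z * y) := by
    rw [← hxy]; noncomm_ring
  have hz : z ^ 2 * x = x * z ^ 2 + (y * z + z * y) := by
    rw [← hzx]; noncomm_ring
  show _ * x = x * _
  rw [add_mul, add_mul, hy, hz]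
  noncomm_ring

variable (R) (x y z : A)

def shiftedCasimir (c : R) : A := x ^ 2 + y ^ 2 + z ^ 2 - algebraMap R A c

def lowerOrderedMonomials (n : ℕ) : Submodule R A :=
  span R {u | ∃ a j ν : ℕ, j < n ∧ ν ≤ 1 ∧ u = x ^ a * y ^ j * z ^ ν}

def casimirMonomials (c : R) : Submodule R A :=
  span R {u | ∃ m n k ν : ℕ, ν ≤ 1 ∧
    u = x ^ m * y ^ n * z ^ ν * shiftedCasimir R x y z c ^ k}

variable {R x y z}

theorem monomial_mem_lowerOrderedMonomials {a j n ν : ℕ} (hj : j < n) (hν : ν ≤ 1) :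
    x ^ a * y ^ j * z ^ ν ∈ lowerOrderedMonomials R x y z n :=
  subset_span ⟨a, j, ν, hj, hν, rfl⟩

theorem lowerOrderedMonomials_mono : Monotone (lowerOrderedMonomials R x y z) :=
  fun _ _ h => span_mono fun _ ⟨a, j, ν, hj, hν, hu⟩ => ⟨a, j, ν, hj.trans_le h, hν, hu⟩

theorem mul_mem_of_mem_lowerOrderedMonomials {n : ℕ} {b g : A} {T : Submodule R A}
    (hb : b ∈ lowerOrderedMonomials R x y z n)
    (h : ∀ a j, j < n → x ^ a * y ^ j * g ∈ T ∧ x ^ a * y ^ j * z * g ∈ T) : b * g ∈ T := by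
  refine mul_right_mem_of_mem_span hb ?_
  rintro _ ⟨a, j, ν, hj, hν, rfl⟩
  obtain rfl | rfl : ν = 0 ∨ ν = 1 := by omega
  · simpa using (h a j hj).1
  · simpa using (h a j hj).2

theorem pow_mul_pow_mul_sub_mem_lowerOrderedMonomials (hxy : ⁅x, y⁆ = z) (hyz : ⁅y, z⁆ = x)
    (m n : ℕ) : x ^ m * y ^ n * x - x ^ (m + 1) * y ^ n ∈ lowerOrderedMonomials R x y z n := by
  rw [Ring.lie_def] at hxy hyz
  induction n using Nat.strong_induction_on generalizing m with
  | _ n ih =>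
  cases n with
  | zero => simp [pow_succ]
  | succ n =>
    have hstep : x ^ m * y ^ (n + 1) * x - x ^ (m + 1) * y ^ (n + 1) =
        (x ^ m * y ^ n * x - x ^ (m + 1) * y ^ n) * y - x ^ m * y ^ n * z ^ 1 := by
      rw [← hxy]; noncomm_ring
    rw [hstep]
    refine sub_mem (mul_mem_of_mem_lowerOrderedMonomials (ih n n.lt_succ_self m)
      fun a j hj => ⟨?_, ?_⟩) (monomial_mem_lowerOrderedMonomials n.lt_succ_self le_rfl)
    · simpa [pow_succ, mul_assoc] using
        monomial_mem_lowerOrderedMonomials (R := R) (x := x) (y := y) (z := z) (a := a)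
          (Nat.succ_lt_succ hj) (zero_le_one)
    · have h : x ^ a * y ^ j * z * y = x ^ a * y ^ (j + 1) * z ^ 1
          - x ^ (a + 1) * y ^ j * z ^ 0 - (x ^ a * y ^ j * x - x ^ (a + 1) * y ^ j) := by
        rw [← hyz]; noncomm_ring
      rw [h]
      refine sub_mem (sub_mem ?_ ?_) ?_
      · exact monomial_mem_lowerOrderedMonomials (Nat.succ_lt_succ hj) le_rfl
      · exact monomial_mem_lowerOrderedMonomials (hj.trans n.lt_succ_self) zero_le_one
      · have hj' := hj.trans n.lt_succ_self
        exact lowerOrderedMonomials_mono hj'.le (ih j hj' a)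

theorem monomial_mem_casimirMonomials {m n k ν : ℕ} (c : R) (hν : ν ≤ 1) :
    x ^ m * y ^ n * z ^ ν * shiftedCasimir R x y z c ^ k ∈ casimirMonomials R x y z c :=
  subset_span ⟨m, n, k, ν, hν, rfl⟩

theorem lowerOrderedMonomials_le_casimirMonomials (c : R) (n : ℕ) :
    lowerOrderedMonomials R x y z n ≤ casimirMonomials R x y z c :=
  span_le.mpr fun _ ⟨a, j, ν, _, hν, hu⟩ => hu ▸ by
    simpa using monomial_mem_casimirMonomials (m := a) (n := j) (k := 0) c hν

theorem pow_mul_pow_mem_casimirMonomials (c : R) (m n : ℕ) :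
    x ^ m * y ^ n ∈ casimirMonomials R x y z c := by
  simpa using monomial_mem_casimirMonomials (x := x) (y := y) (z := z) (m := m) (n := n) (k := 0)
    c zero_le_one

theorem pow_mul_pow_mul_z_mem_casimirMonomials (c : R) (m n : ℕ) :
    x ^ m * y ^ n * z ∈ casimirMonomials R x y z c := by
  simpa using monomial_mem_casimirMonomials (x := x) (y := y) (z := z) (m := m) (n := n) (k := 0)
    c le_rfl

theorem pow_mul_pow_mul_x_mem_casimirMonomials (hxy : ⁅x, y⁆ = z) (hyz : ⁅y, z⁆ = x) (c : R)
    (m n : ℕ) :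
    x ^ m * y ^ n * x ∈ casimirMonomials R x y z c := by
  rw [← sub_add_cancel (x ^ m * y ^ n * x) (x ^ (m + 1) * y ^ n)]
  exact add_mem (lowerOrderedMonomials_le_casimirMonomials c n
    (pow_mul_pow_mul_sub_mem_lowerOrderedMonomials hxy hyz m n))
    (pow_mul_pow_mem_casimirMonomials c _ _)

theorem pow_mul_pow_mul_z_mul_mem_casimirMonomials (hxy : ⁅x, y⁆ = z) (hyz : ⁅y, z⁆ = x)
    (hzx : ⁅z, x⁆ = y) (c : R) (m n : ℕ) :
    x ^ m * y ^ n * z * x ∈ casimirMonomials R x y z c ∧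
      x ^ m * y ^ n * z * z ∈ casimirMonomials R x y z c := by
  have hzx' : z * x = x * z + y := by rw [← hzx, Ring.lie_def]; abel
  induction n using Nat.strong_induction_on generalizing m with
  | _ n ih =>
  have hlow := pow_mul_pow_mul_sub_mem_lowerOrderedMonomials (R := R) hxy hyz m n
  constructor
  · have h : x ^ m * y ^ n * z * x = (x ^ m * y ^ n * x - x ^ (m + 1) * y ^ n) * z
        + x ^ (m + 1) * y ^ n * z + x ^ m * y ^ (n + 1) := by
      rw [mul_assoc _ z x, hzx']; noncomm_ring
    rw [h]
    refine add_mem (add_mem (mul_mem_of_mem_lowerOrderedMonomials hlow fun a j hj =>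
      ⟨pow_mul_pow_mul_z_mem_casimirMonomials c a j, (ih j hj a).2⟩)
      (pow_mul_pow_mul_z_mem_casimirMonomials c _ _)) (pow_mul_pow_mem_casimirMonomials c _ _)
  · have h : x ^ m * y ^ n * z * z = x ^ m * y ^ n * z ^ 0 * shiftedCasimir R x y z c ^ 1
        + x ^ m * y ^ n * algebraMap R A c - (x ^ m * y ^ n * x - x ^ (m + 1) * y ^ n) * x
        - x ^ (m + 1) * y ^ n * x - x ^ m * y ^ (n + 2) := by
      rw [shiftedCasimir]; noncomm_ring
    rw [h]
    refine sub_mem (sub_mem (sub_mem (add_mem (monomial_mem_casimirMonomials c zero_le_one) ?_)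
      (mul_mem_of_mem_lowerOrderedMonomials hlow fun a j hj =>
        ⟨pow_mul_pow_mul_x_mem_casimirMonomials hxy hyz c a j, (ih j hj a).1⟩))
      (pow_mul_pow_mul_x_mem_casimirMonomials hxy hyz c _ _))
      (pow_mul_pow_mem_casimirMonomials c _ _)
    rw [← Algebra.commutes, ← Algebra.smul_def]
    exact smul_mem _ c (pow_mul_pow_mem_casimirMonomials c m n)

theorem commute_shiftedCasimir (hxy : ⁅x, y⁆ = z) (hyz : ⁅y, z⁆ = x) (hzx : ⁅z, x⁆ = y)
    (c : R) {g : A} (hg : g ∈ ({x, y, z} : Set A)) : Commute (shiftedCasimir R x y z c) g := by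
  refine Commute.sub_left ?_ (Algebra.commute_algebraMap_left c g)
  rcases hg with rfl | rfl | rfl
  · exact commute_sq_add_sq_add_sq hxy hzx
  · rw [add_rotate]
    exact commute_sq_add_sq_add_sq hyz hxy
  · rw [← add_rotate]
    exact commute_sq_add_sq_add_sq hzx hyz

theorem mul_shiftedCasimir_pow_mem_casimirMonomials {c : R} {a : A}
    (ha : a ∈ casimirMonomials R x y z c) (k : ℕ) :
    a * shiftedCasimir R x y z c ^ k ∈ casimirMonomials R x y z c := by
  refine mul_right_mem_of_mem_span ha ?_
  rintro _ ⟨m, n, k', ν, hν, rfl⟩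
  rw [mul_assoc, ← pow_add]
  exact monomial_mem_casimirMonomials c hν

theorem mul_mem_casimirMonomials_of_commute {c : R} {a g : A}
    (ha : a ∈ casimirMonomials R x y z c) (hg : Commute (shiftedCasimir R x y z c) g)
    (h : ∀ m n, x ^ m * y ^ n * g ∈ casimirMonomials R x y z c ∧
      x ^ m * y ^ n * z * g ∈ casimirMonomials R x y z c) :
    a * g ∈ casimirMonomials R x y z c := by
  refine mul_right_mem_of_mem_span ha ?_
  rintro _ ⟨m, n, k, ν, hν, rfl⟩
  rw [mul_assoc, (hg.pow_left k).eq, ← mul_assoc]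
  refine mul_shiftedCasimir_pow_mem_casimirMonomials ?_ k
  obtain rfl | rfl : ν = 0 ∨ ν = 1 := by omega
  · simpa using (h m n).1
  · simpa using (h m n).2

theorem mul_mem_casimirMonomials (hxy : ⁅x, y⁆ = z) (hyz : ⁅y, z⁆ = x) (hzx : ⁅z, x⁆ = y)
    {c : R} {a g : A} (ha : a ∈ casimirMonomials R x y z c) (hg : g ∈ ({x, y, z} : Set A)) :
    a * g ∈ casimirMonomials R x y z c := by
  refine mul_mem_casimirMonomials_of_commute ha (commute_shiftedCasimir hxy hyz hzx c hg) ?_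
  intro m n
  have hzx_mem := pow_mul_pow_mul_z_mul_mem_casimirMonomials (R := R) hxy hyz hzx c m n
  rcases hg with hg | hg | hg <;> subst g
  · exact ⟨pow_mul_pow_mul_x_mem_casimirMonomials hxy hyz c m n, hzx_mem.1⟩
  · have h : x ^ m * y ^ n * z * y = x ^ m * y ^ (n + 1) * z - x ^ m * y ^ n * x := by
      rw [← hyz, Ring.lie_def]; noncomm_ring
    refine ⟨?_, h ▸ sub_mem (pow_mul_pow_mul_z_mem_casimirMonomials c m (n + 1))
      (pow_mul_pow_mul_x_mem_casimirMonomials hxy hyz c m n)⟩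
    rw [mul_assoc, ← pow_succ]
    exact pow_mul_pow_mem_casimirMonomials c m (n + 1)
  · exact ⟨pow_mul_pow_mul_z_mem_casimirMonomials c m n, hzx_mem.2⟩

theorem casimirMonomials_eq_top (hgen : Algebra.adjoin R {x, y, z} = ⊤) (hxy : ⁅x, y⁆ = z)
    (hyz : ⁅y, z⁆ = x) (hzx : ⁅z, x⁆ = y) (c : R) : casimirMonomials R x y z c = ⊤ :=
  eq_top_of_one_mem_of_mul_mem hgen (by simpa using pow_mul_pow_mem_casimirMonomials c 0 0)
    fun _ ha _ hg => mul_mem_casimirMonomials hxy hyz hzx ha hg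

end OrderedMonomials

/-- In `U(𝔰𝔩₂(ℂ))` with generators `X, Y, Z` satisfying `[X,Y]=Z`, `[Y,Z]=X`, `[Z,X]=Y`
and `P = X² + Y² + Z²`, the elements `Xᵐ Yⁿ Zᵛ (P − c)ᵏ` with `m, n, k ∈ ℕ`, `ν ∈ {0,1}`
span `U(𝔰𝔩₂(ℂ))`; hence the classes `[Xᵐ Yⁿ Zᵛ]` span the quotient by `(P − c)`. -/
theorem monomials_span_sl2
    {L : Type*} [LieRing L] [LieAlgebra ℂ L]
    (X Y Z : L) (hspan : Submodule.span ℂ {X, Y, Z} = ⊤)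
    (h1 : ⁅X, Y⁆ = Z) (h2 : ⁅Y, Z⁆ = X) (h3 : ⁅Z, X⁆ = Y) (c : ℂ) :
    Submodule.span ℂ
      {u : UniversalEnvelopingAlgebra ℂ L | ∃ (m nn k ν : ℕ), ν ≤ 1 ∧
        u = ι ℂ X ^ m * ι ℂ Y ^ nn * ι ℂ Z ^ ν *
          (ι ℂ X ^ 2 + ι ℂ Y ^ 2 + ι ℂ Z ^ 2
            - algebraMap ℂ (UniversalEnvelopingAlgebra ℂ L) c) ^ k} = ⊤ := by
  have hgen : Algebra.adjoin ℂ {ι ℂ X, ι ℂ Y, ι ℂ Z} = ⊤ := by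
    simpa [Set.image_insert_eq] using adjoin_image_ι_eq_top hspan
  exact casimirMonomials_eq_top hgen (h1 ▸ (ι_lie X Y).symm) (h2 ▸ (ι_lie Y Z).symm)
    (h3 ▸ (ι_lie Z X).symm) c
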